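/- arXiv:2408.07199 — 2 statements merged into one kernel-verified Lean document; each statement's English description precedes it below -/
import Mathlib

section
/- Suppose preferences over pairs of actions are generated by a Bradley–Terry model p(a_w ≻ a_l) = σ(Q(a_w) − Q(a_l)) for some Q : A → ℝ on a finite set A. Then the policy π parametrized implicitly via r_π(a) := β·log(π(a)/π_ref(a)) that minimizes the expected DPO loss E[−log σ(r_π(a_w) − r_π(a_l))] over all fully supported π (where preferences and pairs are drawn with every unordered pair having positive probability) satisfies π(a) ∝ π_ref(a)·exp(Q(a)/β). -/
open Classical

noncomputable def logistic (x : ℝ) : ℝ := 1 / (1 + Real.exp (-x))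

/-- Implicit reward of a policy: `r_π(a) = β·log(π(a)/π_ref(a))`. -/
noncomputable def implicitReward (β : ℝ) (πref π : A → ℝ) (a : A) : ℝ :=
  β * Real.log (π a / πref a)

/-- Expected DPO loss under a Bradley–Terry preference model with scores `Q`,
where unordered pairs `(a,b)` (a ≠ b) are sampled with probability weight `μ a b`. -/
noncomputable def expectedDPOLoss {A : Type*} [Fintype A]
    (β : ℝ) (πref : A → ℝ) (Q : A → ℝ) (μ : A → A → ℝ) (π : A → ℝ) : ℝ :=
  ∑ a, ∑ b, if a ≠ b then
    μ a b *
      (logistic (Q a - Q b) *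
          (-Real.log (logistic (implicitReward β πref π a - implicitReward β πref π b))) +
        logistic (Q b - Q a) *
          (-Real.log (logistic (implicitReward β πref π b - implicitReward β πref π a))))
  else 0

/-!
Under the Bradley–Terry model the expected DPO loss is a positive combination, over pairs
`a ≠ b`, of binary cross-entropies between `σ(Q a - Q b)` and `σ(r_π a - r_π b)`. By Gibbs'
inequality each of them is minimal exactly when `r_π a - r_π b = Q a - Q b`, and the policy
`π_ref · exp(Q / β)` (normalised) attains this for all pairs at once. So a minimiser `π` must
match every difference of implicit rewards, which determines `π / (π_ref · exp(Q / β))` up to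
a constant.
-/

lemma logistic_eq_sigmoid : logistic = Real.sigmoid := by
  funext x
  rw [logistic, Real.sigmoid_def, one_div]

noncomputable def binaryCrossEntropy (p q : ℝ) : ℝ :=
  p * -Real.log q + (1 - p) * -Real.log (1 - q)

section BinaryCrossEntropy

open Set

lemma binaryCrossEntropy_self_lt {p q : ℝ} (hp : p ∈ Ioo 0 1) (hq : q ∈ Ioo 0 1) (hqp : q ≠ p) :
    binaryCrossEntropy p p < binaryCrossEntropy p q := by
  obtain ⟨hp₀, hp₁⟩ := hp
  obtain ⟨hq₀, hq₁⟩ := hq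
  have hp₁' : 0 < 1 - p := by linarith
  have hq₁' : 0 < 1 - q := by linarith
  have h₁ : p * Real.log (q / p) < q - p :=
    calc p * Real.log (q / p) < p * (q / p - 1) := by
          gcongr
          exact Real.log_lt_sub_one_of_pos (by positivity)
            (by rwa [Ne, div_eq_one_iff_eq hp₀.ne'])
      _ = q - p := by field_simp
  have h₂ : (1 - p) * Real.log ((1 - q) / (1 - p)) ≤ p - q :=
    calc (1 - p) * Real.log ((1 - q) / (1 - p)) ≤ (1 - p) * ((1 - q) / (1 - p) - 1) := by
          gcongr
          exact Real.log_le_sub_one_of_pos (by positivity)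
      _ = p - q := by field_simp; ring
  rw [Real.log_div hq₀.ne' hp₀.ne'] at h₁
  rw [Real.log_div hq₁'.ne' hp₁'.ne'] at h₂
  unfold binaryCrossEntropy
  linarith

lemma binaryCrossEntropy_self_le {p q : ℝ} (hp : p ∈ Ioo 0 1) (hq : q ∈ Ioo 0 1) :
    binaryCrossEntropy p p ≤ binaryCrossEntropy p q := by
  rcases eq_or_ne q p with rfl | hqp
  · exact le_rfl
  · exact (binaryCrossEntropy_self_lt hp hq hqp).le

lemma sum_sum_ite_mul_binaryCrossEntropy_self_lt {A : Type*} [Fintype A] {μ : A → A → ℝ}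
    (hμ : ∀ a b, a ≠ b → 0 < μ a b) {p q : A → A → ℝ} (hp : ∀ a b, p a b ∈ Ioo 0 1)
    (hq : ∀ a b, q a b ∈ Ioo 0 1) {x y : A} (hxy : x ≠ y) (hqp : q x y ≠ p x y) :
    (∑ a, ∑ b, if a ≠ b then μ a b * binaryCrossEntropy (p a b) (p a b) else 0) <
      ∑ a, ∑ b, if a ≠ b then μ a b * binaryCrossEntropy (p a b) (q a b) else 0 := by
  have term_le : ∀ a b, (if a ≠ b then μ a b * binaryCrossEntropy (p a b) (p a b) else 0) ≤
      if a ≠ b then μ a b * binaryCrossEntropy (p a b) (q a b) else 0 := by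
    intro a b
    split_ifs with hab
    · exact mul_le_mul_of_nonneg_left (binaryCrossEntropy_self_le (hp a b) (hq a b))
        (hμ a b hab).le
    · exact le_rfl
  have term_lt : (if x ≠ y then μ x y * binaryCrossEntropy (p x y) (p x y) else 0) <
      if x ≠ y then μ x y * binaryCrossEntropy (p x y) (q x y) else 0 := by
    rw [if_pos hxy, if_pos hxy]
    exact mul_lt_mul_of_pos_left (binaryCrossEntropy_self_lt (hp x y) (hq x y) hqp) (hμ x y hxy)
  exact Finset.sum_lt_sum (fun a _ ↦ Finset.sum_le_sum fun b _ ↦ term_le a b)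
    ⟨x, Finset.mem_univ x,
      Finset.sum_lt_sum (fun b _ ↦ term_le x b) ⟨y, Finset.mem_univ y, term_lt⟩⟩

end BinaryCrossEntropy

section DPOLoss

variable {A : Type*} [Fintype A] {β : ℝ} {πref Q : A → ℝ} {μ : A → A → ℝ}

lemma expectedDPOLoss_eq_sum_binaryCrossEntropy (π : A → ℝ) :
    expectedDPOLoss β πref Q μ π = ∑ a, ∑ b, if a ≠ b then
      μ a b * binaryCrossEntropy (Real.sigmoid (Q a - Q b))
        (Real.sigmoid (implicitReward β πref π a - implicitReward β πref π b)) else 0 := by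
  refine Finset.sum_congr rfl fun a _ ↦ Finset.sum_congr rfl fun b _ ↦ ?_
  rw [logistic_eq_sigmoid, ← neg_sub (Q a), ← neg_sub (implicitReward β πref π a),
    Real.sigmoid_neg, Real.sigmoid_neg, binaryCrossEntropy]

lemma expectedDPOLoss_lt_of_implicitReward_sub_eq (hμ : ∀ a b, a ≠ b → 0 < μ a b)
    {ρ π : A → ℝ} (hρ : ∀ a b, implicitReward β πref ρ a - implicitReward β πref ρ b = Q a - Q b)
    (hπ : ∃ a b, implicitReward β πref π a - implicitReward β πref π b ≠ Q a - Q b) :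
    expectedDPOLoss β πref Q μ ρ < expectedDPOLoss β πref Q μ π := by
  obtain ⟨x, y, hxy⟩ := hπ
  have hne : x ≠ y := by rintro rfl; simp at hxy
  have sigmoid_mem_Ioo : ∀ t, Real.sigmoid t ∈ Set.Ioo 0 1 :=
    fun t ↦ ⟨Real.sigmoid_pos t, Real.sigmoid_lt_one t⟩
  simp only [expectedDPOLoss_eq_sum_binaryCrossEntropy, hρ]
  exact sum_sum_ite_mul_binaryCrossEntropy_self_lt hμ (fun _ _ ↦ sigmoid_mem_Ioo _)
    (fun _ _ ↦ sigmoid_mem_Ioo _) hne (Real.sigmoid_injective.ne hxy)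

end DPOLoss

lemma exists_eq_mul_of_implicitReward_sub_eq {A : Type*} [Nonempty A] {β : ℝ} (hβ : β ≠ 0)
    {πref Q π : A → ℝ} (hπref : ∀ a, 0 < πref a) (hπ : ∀ a, 0 < π a)
    (h : ∀ a b, implicitReward β πref π a - implicitReward β πref π b = Q a - Q b) :
    ∃ c, 0 < c ∧ ∀ a, π a = c * (πref a * Real.exp (Q a / β)) := by
  obtain ⟨a₀⟩ := ‹Nonempty A›
  set g : A → ℝ := fun a ↦ Real.log (π a / πref a) - Q a / β
  have hg : ∀ a, g a = g a₀ := by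
    intro a
    have hdiff := h a a₀
    simp only [implicitReward] at hdiff
    simp only [g]
    field_simp
    linarith
  refine ⟨Real.exp (g a₀), Real.exp_pos _, fun a ↦ ?_⟩
  calc π a = πref a * Real.exp (Real.log (π a / πref a)) := by
        rw [Real.exp_log (div_pos (hπ a) (hπref a)), mul_div_cancel₀ _ (hπref a).ne']
    _ = Real.exp (g a₀) * (πref a * Real.exp (Q a / β)) := by
        rw [← hg a, mul_left_comm, ← Real.exp_add, sub_add_cancel]

section SoftOptimalPolicy

variable {A : Type*} [Fintype A]

noncomputable def softOptimalPolicy (β : ℝ) (πref Q : A → ℝ) (a : A) : ℝ :=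
  πref a * Real.exp (Q a / β) / ∑ b, πref b * Real.exp (Q b / β)

variable [Nonempty A] {β : ℝ} {πref Q : A → ℝ}

lemma sum_mul_exp_pos (hπref : ∀ a, 0 < πref a) : 0 < ∑ b, πref b * Real.exp (Q b / β) :=
  Finset.sum_pos (fun b _ ↦ mul_pos (hπref b) (Real.exp_pos _)) Finset.univ_nonempty

lemma softOptimalPolicy_pos (hπref : ∀ a, 0 < πref a) (a : A) :
    0 < softOptimalPolicy β πref Q a :=
  div_pos (mul_pos (hπref a) (Real.exp_pos _)) (sum_mul_exp_pos hπref)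

lemma sum_softOptimalPolicy (hπref : ∀ a, 0 < πref a) :
    ∑ a, softOptimalPolicy β πref Q a = 1 := by
  simp only [softOptimalPolicy]
  rw [← Finset.sum_div, div_self (sum_mul_exp_pos hπref).ne']

lemma implicitReward_softOptimalPolicy (hβ : β ≠ 0) (hπref : ∀ a, 0 < πref a) (a : A) :
    implicitReward β πref (softOptimalPolicy β πref Q) a =
      Q a - β * Real.log (∑ b, πref b * Real.exp (Q b / β)) := by
  rw [implicitReward, softOptimalPolicy, mul_div_assoc, mul_div_cancel_left₀ _ (hπref a).ne',
    Real.log_div (Real.exp_ne_zero _) (sum_mul_exp_pos hπref).ne', Real.log_exp, mul_sub,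
    mul_div_cancel₀ _ hβ]

lemma implicitReward_softOptimalPolicy_sub (hβ : β ≠ 0) (hπref : ∀ a, 0 < πref a) (a b : A) :
    implicitReward β πref (softOptimalPolicy β πref Q) a -
      implicitReward β πref (softOptimalPolicy β πref Q) b = Q a - Q b := by
  rw [implicitReward_softOptimalPolicy hβ hπref, implicitReward_softOptimalPolicy hβ hπref]
  ring

end SoftOptimalPolicy

theorem dpo_minimizer_is_soft_optimal_general {A : Type*} [Fintype A]
    (πref : A → ℝ) (hrefpos : ∀ a, 0 < πref a)
    (Q : A → ℝ) (β : ℝ) (hβ : 0 < β)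
    (μ : A → A → ℝ) (hμ : ∀ a b, a ≠ b → 0 < μ a b)
    (π : A → ℝ) (hπpos : ∀ a, 0 < π a) (hπsum : ∑ a, π a = 1)
    (hmin : ∀ π' : A → ℝ, (∀ a, 0 < π' a) → (∑ a, π' a = 1) →
      expectedDPOLoss β πref Q μ π ≤ expectedDPOLoss β πref Q μ π') :
    ∃ c : ℝ, 0 < c ∧ ∀ a, π a = c * (πref a * Real.exp (Q a / β)) := by
  have : Nonempty A :=
    Finset.univ_nonempty_iff.mp (Finset.nonempty_of_sum_ne_zero (hπsum ▸ one_ne_zero))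
  refine exists_eq_mul_of_implicitReward_sub_eq hβ.ne' hrefpos hπpos ?_
  by_contra! hπ
  have hlt := expectedDPOLoss_lt_of_implicitReward_sub_eq hμ
    (implicitReward_softOptimalPolicy_sub hβ.ne' hrefpos) hπ
  exact (hmin _ (softOptimalPolicy_pos hrefpos) (sum_softOptimalPolicy hrefpos)).not_gt hlt

/-- if preferences are generated by a Bradley–Terry model with scores `Q`
(and every unordered pair of distinct actions has positive sampling probability), then any
fully supported pmf `π` minimizing the expected DPO loss satisfies
`π(a) ∝ π_ref(a)·exp(Q(a)/β)`. -/
theorem dpo_minimizer_is_soft_optimal {A : Type*} [Fintype A]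
    (hcard : 2 ≤ Fintype.card A)
    (πref : A → ℝ) (hrefpos : ∀ a, 0 < πref a) (hrefsum : ∑ a, πref a = 1)
    (Q : A → ℝ) (β : ℝ) (hβ : 0 < β)
    (μ : A → A → ℝ) (hμ : ∀ a b, a ≠ b → 0 < μ a b)
    (π : A → ℝ) (hπpos : ∀ a, 0 < π a) (hπsum : ∑ a, π a = 1)
    (hmin : ∀ π' : A → ℝ, (∀ a, 0 < π' a) → (∑ a, π' a = 1) →
      expectedDPOLoss β πref Q μ π ≤ expectedDPOLoss β πref Q μ π') :
    ∃ c : ℝ, 0 < c ∧ ∀ a, π a = c * (πref a * Real.exp (Q a / β)) :=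
  dpo_minimizer_is_soft_optimal_general πref hrefpos Q β hβ μ hμ π hπpos hπsum hmin
end

section
/- For the optimal KL-regularized policy π* in the deterministic tree MDP, the per-step implicit reward β·log(π*(a|h_t)/π_ref(a|h_t)) equals the soft advantage V*(h_{t+1}(h_t,a)) − V*(h_t), and summing along any complete trajectory from the root h_1 to a terminal history h_T yields Σ_t β·log(π*(a_t|h_t)/π_ref(a_t|h_t)) = R(h_T) − V*(h_1). -/
/-- `softExp β next Rw pref k s = E_{π_ref-rollouts of length k from s}[exp(R/β)]`
in a deterministic finite-horizon decision process (`k` = steps to go). -/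
noncomputable def softExp {S A : Type*} [Fintype A] (β : ℝ) (next : S → A → S)
    (Rw : S → ℝ) (pref : S → A → ℝ) : ℕ → S → ℝ
  | 0, s => Real.exp (Rw s / β)
  | k + 1, s => ∑ a, pref s a * softExp β next Rw pref k (next s a)

/-- The soft value `V*(h) = β·log E_{π_ref}[exp(R/β)]`. -/
noncomputable def softV {S A : Type*} [Fintype A] (β : ℝ) (next : S → A → S)
    (Rw : S → ℝ) (pref : S → A → ℝ) (k : ℕ) (s : S) : ℝ :=
  β * Real.log (softExp β next Rw pref k s)
/-- The soft-optimal policy `π*(a|h) = π_ref(a|h)·exp((V*(next(h,a)) − V*(h))/β)`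
(used when `k+1` steps remain). -/
noncomputable def pstar {S A : Type*} [Fintype A] (β : ℝ) (next : S → A → S)
    (Rw : S → ℝ) (pref : S → A → ℝ) (k : ℕ) (s : S) (a : A) : ℝ :=
  pref s a * Real.exp ((softV β next Rw pref k (next s a) -
    softV β next Rw pref (k + 1) s) / β)


/-- the per-step implicit reward `β·log(π*(a|h)/π_ref(a|h))` equals
the soft advantage `V*(next(h,a)) − V*(h)`, and summing along any complete trajectory
from the root (with `T` steps) to a terminal history telescopes to `R(h_T) − V*(h_1)`. -/
theorem implicit_reward_eq_advantage_and_telescopes {S A : Type*} [Fintype A] [Nonempty A]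
    (β : ℝ) (hβ : 0 < β) (next : S → A → S)
    (Rw : S → ℝ) (hR : ∀ s, Rw s = 0 ∨ Rw s = 1)
    (pref : S → A → ℝ) (hpos : ∀ s a, 0 < pref s a) (hsum : ∀ s, ∑ a, pref s a = 1) :
    (∀ (k : ℕ) (s : S) (a : A),
      β * Real.log (pstar β next Rw pref k s a / pref s a) =
        softV β next Rw pref k (next s a) - softV β next Rw pref (k + 1) s) ∧
    (∀ (T : ℕ) (s0 : S) (act : ℕ → A) (st : ℕ → S),
      st 0 = s0 → (∀ t, st (t + 1) = next (st t) (act t)) →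
      ∑ t ∈ Finset.range T,
          β * Real.log (pstar β next Rw pref (T - t - 1) (st t) (act t) / pref (st t) (act t))
        = Rw (st T) - softV β next Rw pref T s0) := by
  have hβ' : β ≠ 0 := ne_of_gt hβ
  have hstep : ∀ (k : ℕ) (s : S) (a : A),
      β * Real.log (pstar β next Rw pref k s a / pref s a) =
        softV β next Rw pref k (next s a) - softV β next Rw pref (k + 1) s := by
    intro k s a
    have hp : pref s a ≠ 0 := ne_of_gt (hpos s a)
    rw [pstar, mul_comm (pref s a), mul_div_assoc, div_self hp, mul_one,
      Real.log_exp]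
    field_simp
  refine ⟨hstep, ?_⟩
  intro T s0 act st h0 hnext
  have key : ∀ t ∈ Finset.range T,
      β * Real.log (pstar β next Rw pref (T - t - 1) (st t) (act t) / pref (st t) (act t))
        = softV β next Rw pref (T - (t+1)) (st (t+1)) - softV β next Rw pref (T - t) (st t) := by
    intro t ht
    rw [Finset.mem_range] at ht
    have h1 : T - t - 1 + 1 = T - t := by omega
    have h2 : T - (t + 1) = T - t - 1 := by omega
    rw [hstep, h1, h2, hnext t]
  rw [Finset.sum_congr rfl key, Finset.sum_range_sub
    (fun t => softV β next Rw pref (T - t) (st t)), Nat.sub_self, Nat.sub_zero, h0]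
  have : softV β next Rw pref 0 (st T) = Rw (st T) := by
    rw [softV, softExp, Real.log_exp]
    field_simp
  rw [this]
end
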